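/- Root sampling computes the correct Bayesian posterior (Lemma 1, discrete version): Let Θ = Fin K be a finite parameter space with prior probability mass function b₀, let S and A be countable state and action types, and for each θ let P_θ : S → A → PMF S be a dynamics kernel. For a history h = (s₀, [(a₁,s₁),…,(a_n,s_n)]) consisting of an initial state and a list of action–state transitions, define the true posterior by b(θ | h) = b₀(θ) · ∏_{t=1}^{n} P_θ(s_t | s_{t−1}, a_t) / Z(h), where Z(h) = ∑_{θ'} b₀(θ') · ∏_{t=1}^{n} P_{θ'}(s_t | s_{t−1}, a_t), and define the root-sampling distribution recursively by b̃(θ | (s₀,[])) = b₀(θ) and b̃(θ | h·(a,s')) = b̃(θ | h) · P_θ(s' | s_h, a) / (∑_{θ'} b̃(θ' | h) · P_{θ'}(s' | s_h, a)), where s_h denotes the last state of h. Then for every history h all of whose normalizing constants are strictly positive, b(θ | h) = b̃(θ | h) for all θ ∈ Θ. -/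
import Mathlib


open scoped ENNReal

/-- The last state of a history `(s₀, [(a₁,s₁),…,(aₙ,sₙ)])`. -/
noncomputable def lastState {S A : Type*} (s₀ : S) (l : List (A × S)) : S :=
  l.getLast?.elim s₀ Prod.snd

/-- Likelihood `∏ₜ P_θ(sₜ | sₜ₋₁, aₜ)` of the transitions of a history under parameter `θ`,
starting from state `s`. -/
noncomputable def lik {K : ℕ} {S A : Type*} (P : Fin K → S → A → PMF S) (θ : Fin K) :
    S → List (A × S) → ℝ≥0∞
  | _, [] => 1
  | s, (a, s') :: rest => P θ s a s' * lik P θ s' rest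

/-- Normalizing constant `Z(h) = ∑_θ' b₀(θ') ∏ₜ P_θ'(sₜ | sₜ₋₁, aₜ)`. -/
noncomputable def Znorm {K : ℕ} {S A : Type*} (b₀ : PMF (Fin K)) (P : Fin K → S → A → PMF S)
    (s₀ : S) (l : List (A × S)) : ℝ≥0∞ :=
  ∑ θ', b₀ θ' * lik P θ' s₀ l

/-- The true (batch) Bayesian posterior `b(θ | h) = b₀(θ) · ∏ₜ P_θ(sₜ | sₜ₋₁, aₜ) / Z(h)`. -/
noncomputable def truePosterior {K : ℕ} {S A : Type*} (b₀ : PMF (Fin K)) (P : Fin K → S → A → PMF S)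
    (s₀ : S) (l : List (A × S)) (θ : Fin K) : ℝ≥0∞ :=
  b₀ θ * lik P θ s₀ l / Znorm b₀ P s₀ l

/-- The root-sampling belief, obtained from the prior by successive one-step Bayes updates
`b̃(θ | h·(a,s')) = b̃(θ | h) · P_θ(s' | s_h, a) / ∑_θ' b̃(θ' | h) · P_θ'(s' | s_h, a)`,
with `b̃(θ | (s₀,[])) = b₀(θ)`, processing the transitions of the history in order. -/
noncomputable def rootSamplingBelief {K : ℕ} {S A : Type*} (P : Fin K → S → A → PMF S) :
    (Fin K → ℝ≥0∞) → S → List (A × S) → (Fin K → ℝ≥0∞)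
  | b, _, [] => b
  | b, s, (a, s') :: rest =>
      rootSamplingBelief P
        (fun θ => b θ * P θ s a s' / ∑ θ', b θ' * P θ' s a s') s' rest

lemma rootSampling_key {K : ℕ} {S A : Type*} (P : Fin K → S → A → PMF S) :
    ∀ (l : List (A × S)) (b : Fin K → ℝ≥0∞) (s : S),
      (∑ θ', b θ') = 1 →
      (∀ n, 0 < ∑ θ', b θ' * lik P θ' s (l.take n)) →
      ∀ θ, rootSamplingBelief P b s l θ
          = b θ * lik P θ s l / ∑ θ', b θ' * lik P θ' s l := by
  intro l
  induction l with
  | nil =>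
    intro b s hb _ θ
    simp [rootSamplingBelief, lik, hb]
  | cons p rest ih =>
    obtain ⟨a, s'⟩ := p
    intro b s hb hpos θ
    set Z₁ : ℝ≥0∞ := ∑ θ', b θ' * P θ' s a s' with hZ₁def
    have hZ₁pos : 0 < Z₁ := by
      have h := hpos 1
      simpa [lik] using h
    have hZ₁ne : Z₁ ≠ 0 := hZ₁pos.ne'
    have hZ₁le : Z₁ ≤ 1 := by
      rw [← hb]
      refine Finset.sum_le_sum fun θ' _ => ?_
      calc b θ' * P θ' s a s' ≤ b θ' * 1 :=
            mul_le_mul_right (PMF.coe_le_one _ _) _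
        _ = b θ' := mul_one _
    have hZ₁top : Z₁ ≠ ∞ := (lt_of_le_of_lt hZ₁le ENNReal.one_lt_top).ne
    set b' : Fin K → ℝ≥0∞ := fun θ => b θ * P θ s a s' / Z₁ with hb'def
    have hsum' : ∀ (L : List (A × S)),
        (∑ θ', b' θ' * lik P θ' s' L)
          = (∑ θ', b θ' * lik P θ' s ((a, s') :: L)) / Z₁ := by
      intro L
      rw [div_eq_mul_inv, Finset.sum_mul]
      refine Finset.sum_congr rfl fun θ' _ => ?_
      show b θ' * P θ' s a s' / Z₁ * lik P θ' s' L
          = b θ' * (P θ' s a s' * lik P θ' s' L) * Z₁⁻¹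
      rw [div_eq_mul_inv]
      ring
    have hb' : (∑ θ', b' θ') = 1 := by
      have : (∑ θ', b' θ') = Z₁ / Z₁ := by
        simp only [hb'def, div_eq_mul_inv, ← Finset.sum_mul, hZ₁def]
      rw [this, ENNReal.div_self hZ₁ne hZ₁top]
    have hpos' : ∀ n, 0 < ∑ θ', b' θ' * lik P θ' s' (rest.take n) := by
      intro n
      rw [hsum']
      refine ENNReal.div_pos ?_ hZ₁top
      have h := hpos (n + 1)
      simpa using h.ne'
    have hrec : rootSamplingBelief P b s ((a, s') :: rest) θ
        = rootSamplingBelief P b' s' rest θ := rfl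
    rw [hrec, ih b' s' hb' hpos', hsum']
    have hbθ : b' θ * lik P θ s' rest
        = b θ * lik P θ s ((a, s') :: rest) / Z₁ := by
      simp only [hb'def, lik, div_eq_mul_inv]
      ring
    rw [hbθ]
    set X := b θ * lik P θ s ((a, s') :: rest)
    set Y := ∑ θ', b θ' * lik P θ' s ((a, s') :: rest)
    have hinv : (Y / Z₁)⁻¹ = Y⁻¹ * Z₁⁻¹⁻¹ := by
      rw [div_eq_mul_inv]
      exact ENNReal.mul_inv (Or.inr (ENNReal.inv_ne_top.mpr hZ₁ne))
        (Or.inr (ENNReal.inv_ne_zero.mpr hZ₁top))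
    rw [div_eq_mul_inv (X / Z₁), hinv, inv_inv, div_eq_mul_inv X Z₁,
      div_eq_mul_inv X Y]
    rw [mul_comm Y⁻¹ Z₁, ← mul_assoc, mul_assoc X Z₁⁻¹ Z₁,
      ENNReal.inv_mul_cancel hZ₁ne hZ₁top, mul_one]

/-- **Lemma 1 (discrete version): root sampling computes the correct Bayesian posterior.**
If all normalizing constants along the history (both of the batch posterior and of the
root-sampling recursion) are strictly positive, then the root-sampling belief coincides
with the true Bayesian posterior at the history. -/
theorem root_sampling_eq_true_posterior {K : ℕ} {S A : Type*}
    [Countable S] [Countable A]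
    (b₀ : PMF (Fin K)) (P : Fin K → S → A → PMF S)
    (s₀ : S) (l : List (A × S))
    (hZ : ∀ n, 0 < Znorm b₀ P s₀ (l.take n))
    (hZtilde : ∀ (n : ℕ) (hn : n < l.length),
      0 < ∑ θ', rootSamplingBelief P (fun θ => b₀ θ) s₀ (l.take n) θ' *
        P θ' (lastState s₀ (l.take n)) (l.get ⟨n, hn⟩).1 (l.get ⟨n, hn⟩).2) :
    ∀ θ : Fin K,
      truePosterior b₀ P s₀ l θ = rootSamplingBelief P (fun θ => b₀ θ) s₀ l θ := by
  intro θ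
  have hb : (∑ θ', (fun θ => b₀ θ) θ') = 1 := by
    simpa using (b₀.tsum_coe ▸ (tsum_eq_sum (f := fun θ' => b₀ θ')
      (s := Finset.univ) (by simp)).symm)
  rw [rootSampling_key P l (fun θ => b₀ θ) s₀ hb (fun n => hZ n) θ]
  rfl
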